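/- Let k ≥ 4 and s ≥ 2 be fixed integers. For all sufficiently large n there exists a simple graph G on n vertices with exactly t_{k−1}(n) + s − 1 edges, K_k-covering number τ_k(G) = s, and exactly N_k(G) = N_k(n,s) copies of K_k, where, writing q = ⌊n/(k−1)⌋ and r = n − (k−1)q, one defines N_k(n,s) = s·q^{k−3}(q−1) if r = 0, N_k(n,s) = s·q^{k−2} − q^{k−3} if r = 1, and N_k(n,s) = s·(q+1)^{r−2} q^{k−r} if 2 ≤ r ≤ k−2. -/

import Mathlib

/-!
View the Turán graph `T_{k-1}(n)` as the complete multipartite graph on the residue classes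
modulo `k - 1` and add `s` disjoint edges inside class `0`. A `K_k` must then use exactly one added
edge together with one vertex from every other class, so the copies of `K_k` are counted by `s`
times the product of the sizes of the other classes; one endpoint of each added edge meets all of
them, and `s` vertex-disjoint copies show that fewer vertices cannot. To end up with
`t_{k-1}(n) + s - 1` edges one edge has to be lost: for `r ≠ 1` a vertex is moved into class `0`
from another class of the same size, for `r = 1` the edge from an endpoint of an added edge to a
vertex of class `1` is deleted, which destroys the `q^{k-3}` copies of `K_k` through it.
-/

open Finset SimpleGraph

/-- Number of `k`-cliques of a graph. -/
noncomputable def cliqueCount {V : Type*} (G : SimpleGraph V) (k : ℕ) : ℕ :=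
  Nat.card {T : Finset V // G.IsNClique k T}

/-- `K_k`-covering number: minimum size of a vertex set meeting every `k`-clique. -/
noncomputable def cliqueCover {V : Type*} [Fintype V] [DecidableEq V]
    (G : SimpleGraph V) (k : ℕ) : ℕ :=
  sInf {m | ∃ S : Finset V, S.card = m ∧ ∀ T : Finset V, G.IsNClique k T → ∃ v ∈ T, v ∈ S}

/-- Number of edges of a graph. -/
noncomputable def edgeCount {V : Type*} (G : SimpleGraph V) : ℕ := Nat.card G.edgeSet

/-- Number of edges of the Turán graph `T_r(n)`. -/
noncomputable def turanEdges (r n : ℕ) : ℕ := edgeCount (turanGraph n r)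

/-- `e(n) = n² - 4⌊n²/4⌋`. -/
def eDef (n : ℕ) : ℕ := n ^ 2 - 4 * (n ^ 2 / 4)

/-- `m_{s,t}(n)`: least `m` such that `4s - 4t - 4m + e(n)` is a perfect square. -/
noncomputable def mst (s t n : ℕ) : ℕ :=
  sInf {m : ℕ | ∃ p : ℕ, (p : ℤ) ^ 2 = 4 * s - 4 * t - 4 * m + eDef n}

/-- `R₃(n,s,t) = (4s - 4t - 4m_{s,t}(n) + e(n))^{1/2}`. -/
noncomputable def R3 (s t n : ℕ) : ℕ :=
  Nat.sqrt (4 * (s : ℤ) - 4 * t - 4 * mst s t n + eDef n).toNat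

/-- Number of copies of `F` in `G`: subgraphs of `G` isomorphic to `F`. -/
noncomputable def copyCount {α V : Type*} (F : SimpleGraph α) (G : SimpleGraph V) : ℕ :=
  Nat.card {H : G.Subgraph // Nonempty (F ≃g H.coe)}

/-- `F`-covering number of `G`. -/
noncomputable def coverNumber {α V : Type*} [Fintype V] [DecidableEq V]
    (F : SimpleGraph α) (G : SimpleGraph V) : ℕ :=
  sInf {m | ∃ S : Finset V, S.card = m ∧
    ∀ H : G.Subgraph, Nonempty (F ≃g H.coe) → ∃ v ∈ H.verts, v ∈ S}

/-- A graph `F` is `k`-critical. -/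
def IsCritical {α : Type*} (k : ℕ) (F : SimpleGraph α) : Prop :=
  F.chromaticNumber = k ∧ ∃ e ∈ F.edgeSet, (F.deleteEdges {e}).chromaticNumber < k

/-- `c(n,F)`: minimum number of copies of `F` after adding one new edge to `T_{k-1}(n)`. -/
noncomputable def cnF {α : Type*} (k n : ℕ) (F : SimpleGraph α) : ℕ :=
  sInf {c | ∃ u v : Fin n, u ≠ v ∧ ¬ (turanGraph n (k - 1)).Adj u v ∧
    c = copyCount F (turanGraph n (k - 1) ⊔ fromEdgeSet {s(u, v)})}

/-- `N_k(n,s)` from Theorem 1.3. -/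
def NkBound (k s n : ℕ) : ℕ :=
  if n % (k - 1) = 0 then s * (n / (k - 1)) ^ (k - 3) * (n / (k - 1) - 1)
  else if n % (k - 1) = 1 then s * (n / (k - 1)) ^ (k - 2) - (n / (k - 1)) ^ (k - 3)
  else s * (n / (k - 1) + 1) ^ (n % (k - 1) - 2) * (n / (k - 1)) ^ (k - n % (k - 1))

/-- `R_k(n,s,t)`. -/
noncomputable def Rk (k s t n : ℕ) : ℝ :=
  Real.sqrt ((2 * ((k : ℝ) - 1) * ((s : ℝ) - t) +
    ((k : ℝ) - 1 - (n % (k - 1) : ℕ)) * (n % (k - 1) : ℕ)) / ((k : ℝ) - 2))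

/-- `c(x₁,…,x_{k-1},F)`: copies of `F` in the complete multipartite graph with parts
`Fin (x i)` plus one edge inside part `0`. -/
noncomputable def cParts {α : Type*} (k : ℕ) (x : Fin (k - 1) → ℕ) (F : SimpleGraph α) : ℕ :=
  sInf {c | ∃ i₀ : Fin (k - 1), ∃ a b : Fin (x i₀), (i₀ : ℕ) = 0 ∧ a ≠ b ∧
    c = copyCount F (completeMultipartiteGraph (fun i => Fin (x i)) ⊔
      fromEdgeSet {s(⟨i₀, a⟩, ⟨i₀, b⟩)})}

section Counting

variable {V : Type*}

lemma cliqueCount_eq_card_cliqueFinset [Fintype V] [DecidableEq V] (G : SimpleGraph V)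
    [DecidableRel G.Adj] (k : ℕ) : cliqueCount G k = #(G.cliqueFinset k) := by
  rw [cliqueCount, Nat.card_eq_fintype_card, Fintype.card_subtype]
  rfl

lemma edgeCount_eq_card_edgeFinset [Fintype V] (G : SimpleGraph V) [DecidableRel G.Adj] :
    edgeCount G = #G.edgeFinset := by
  rw [edgeCount, Nat.card_eq_fintype_card, edgeFinset_card]

lemma edgeCount_deleteEdges_add_one [Finite V] (G : SimpleGraph V) {e : Sym2 V}
    (he : e ∈ G.edgeSet) : edgeCount (G.deleteEdges {e}) + 1 = edgeCount G := by
  rw [edgeCount, edgeCount, Nat.card_coe_set_eq, Nat.card_coe_set_eq, edgeSet_deleteEdges,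
    Set.ncard_sdiff_singleton_add_one he]

lemma isNClique_deleteEdges_iff {G : SimpleGraph V} {u v : V} (huv : u ≠ v) {k : ℕ}
    {T : Finset V} :
    (G.deleteEdges {s(u, v)}).IsNClique k T ↔ G.IsNClique k T ∧ ¬ (u ∈ T ∧ v ∈ T) := by
  simp only [isNClique_iff, isClique_iff, Set.Pairwise, deleteEdges_adj, Set.mem_singleton_iff,
    mem_coe]
  constructor
  · rintro ⟨hT, rfl⟩
    exact ⟨⟨fun x hx y hy hxy => (hT hx hy hxy).1, rfl⟩,
      fun ⟨hu, hv⟩ => (hT hu hv huv).2 rfl⟩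
  · rintro ⟨⟨hT, rfl⟩, huvT⟩
    refine ⟨fun x hx y hy hxy => ⟨hT hx hy hxy, fun h => huvT ?_⟩, rfl⟩
    rcases Sym2.eq_iff.1 h with ⟨rfl, rfl⟩ | ⟨rfl, rfl⟩ <;> tauto

lemma cliqueCount_deleteEdges_add [Fintype V] [DecidableEq V] (G : SimpleGraph V)
    [DecidableRel G.Adj] {u v : V} (huv : u ≠ v) (k : ℕ) :
    cliqueCount (G.deleteEdges {s(u, v)}) k + #{T ∈ G.cliqueFinset k | u ∈ T ∧ v ∈ T} =
      cliqueCount G k := by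
  classical
  have : (G.deleteEdges {s(u, v)}).cliqueFinset k =
      {T ∈ G.cliqueFinset k | ¬ (u ∈ T ∧ v ∈ T)} := by
    ext T
    simp only [mem_cliqueFinset_iff, mem_filter, isNClique_deleteEdges_iff huv]
  rw [cliqueCount_eq_card_cliqueFinset, cliqueCount_eq_card_cliqueFinset, this, add_comm,
    card_filter_add_card_filter_not]

lemma cliqueCover_eq_of_cover_of_packing [Fintype V] [DecidableEq V] {ι : Type*} [Fintype ι]
    {G : SimpleGraph V} {k : ℕ} (S : Finset V)
    (hS : ∀ T, G.IsNClique k T → ∃ v ∈ T, v ∈ S)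
    (T : ι → Finset V) (hT : ∀ i, G.IsNClique k (T i))
    (hdisj : Pairwise fun i j => Disjoint (T i) (T j)) (hcard : #S = Fintype.card ι) :
    cliqueCover G k = Fintype.card ι := by
  refine le_antisymm (hcard ▸ Nat.sInf_le ⟨S, rfl, hS⟩) (le_csInf ⟨_, S, rfl, hS⟩ ?_)
  rintro _ ⟨S', rfl, hS'⟩
  choose v hvT hvS using fun i => hS' (T i) (hT i)
  refine card_le_card_of_injOn v (fun i _ => hvS i) fun i _ j _ hij => ?_
  by_contra hne
  exact disjoint_left.1 (hdisj hne) (hvT i) (hij ▸ hvT j)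

end Counting

section Multipartite

variable {V α : Type*} [Fintype V] [DecidableEq α]

lemma card_filter_adj_comap_top_add (c : V → α) (v : V) :
    #{w | ((⊤ : SimpleGraph α).comap c).Adj v w} + #{w | c w = c v} = Fintype.card V := by
  have := card_filter_add_card_filter_not (s := univ) (fun w => c w = c v)
  simp only [comap_adj, top_adj, ne_comm, card_univ] at this ⊢
  omega

lemma edgeCount_eq_edgeCount_deleteIncidenceSet_add [DecidableEq V] (G : SimpleGraph V)
    [DecidableRel G.Adj] (w : V) :
    edgeCount G = edgeCount (G.deleteIncidenceSet w) + #{v | G.Adj w v} := by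
  classical
  rw [edgeCount_eq_card_edgeFinset, edgeCount_eq_card_edgeFinset,
    card_edgeFinset_deleteIncidenceSet, ← neighborFinset_eq_filter, card_neighborFinset_eq_degree,
    Nat.sub_add_cancel (card_incidenceFinset_eq_degree G w ▸
      card_le_card (G.incidenceFinset_subset w))]

lemma card_filter_update_eq [DecidableEq V] (c : V → α) (w : V) {x i : α} (hi : i ≠ x) :
    #{v | Function.update c w x v = i} = #{v | c v = i} - if c w = i then 1 else 0 := by
  have : ({v | Function.update c w x v = i} : Finset V) = ({v | c v = i} : Finset V).erase w := by
    ext v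
    by_cases hv : v = w
    · subst hv; simp [hi.symm]
    · simp [hv]
  rw [this, card_erase_eq_ite]
  split_ifs <;> simp_all

lemma edgeCount_comap_update_add_one [DecidableEq V] (c : V → α) (w : V) {x : α}
    (hx : x ≠ c w) (hcard : #{v | c v = x} = #{v | c v = c w}) :
    edgeCount ((⊤ : SimpleGraph α).comap (Function.update c w x)) + 1 =
      edgeCount ((⊤ : SimpleGraph α).comap c) := by
  classical
  set c' := Function.update c w x
  -- only the edges at `w` change, and `w` loses one neighbour
  have hdel : ((⊤ : SimpleGraph α).comap c').deleteIncidenceSet w =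
      ((⊤ : SimpleGraph α).comap c).deleteIncidenceSet w := by
    ext u v
    simp only [deleteIncidenceSet_adj, comap_adj, top_adj]
    constructor <;> rintro ⟨h, hu, hv⟩ <;>
      simpa [c', Function.update_of_ne hu, Function.update_of_ne hv, hu, hv] using h
  have hclass : #{v | c' v = c' w} = #{v | c v = x} + 1 := by
    have : ({v | c' v = c' w} : Finset V) = insert w ({v | c v = x} : Finset V) := by
      ext v
      by_cases hv : v = w
      · subst hv; simp [c']
      · simp [c', hv]
    rw [this, card_insert_of_notMem (by simpa using hx.symm)]
  have h' := card_filter_adj_comap_top_add c' w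
  have h := card_filter_adj_comap_top_add c w
  rw [edgeCount_eq_edgeCount_deleteIncidenceSet_add ((⊤ : SimpleGraph α).comap c') w,
    edgeCount_eq_edgeCount_deleteIncidenceSet_add ((⊤ : SimpleGraph α).comap c) w, hdel]
  omega

end Multipartite

section MatchingGraph

variable {V α ι : Type*}

def multipartiteWithMatching (c : V → α) (a b : ι → V) : SimpleGraph V :=
  (⊤ : SimpleGraph α).comap c ⊔ fromEdgeSet (Set.range fun j => s(a j, b j))

structure IsClassMatching (c : V → α) (a₀ : α) (a b : ι → V) : Prop where
  injective : Function.Injective (Sum.elim a b)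
  color_left : ∀ j, c (a j) = a₀
  color_right : ∀ j, c (b j) = a₀

def transversals [Fintype V] [Fintype α] [DecidableEq α] (c : V → α) (a₀ : α) :
    Finset ({x // x ≠ a₀} → V) :=
  Fintype.piFinset fun i => {v | c v = i}

def matchingClique [Fintype α] [DecidableEq α] [DecidableEq V] {a₀ : α} (a b : ι → V)
    (j : ι) (f : {x // x ≠ a₀} → V) : Finset V :=
  insert (a j) (insert (b j) (univ.image f))

variable {c : V → α} {a₀ : α} {a b : ι → V}

lemma mem_transversals [Fintype V] [Fintype α] [DecidableEq α] {f : {x // x ≠ a₀} → V} :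
    f ∈ transversals c a₀ ↔ ∀ i, c (f i) = i := by
  simp [transversals]

lemma mem_matchingClique [Fintype α] [DecidableEq α] [DecidableEq V] {j : ι}
    {f : {x // x ≠ a₀} → V} {x : V} :
    x ∈ matchingClique a b j f ↔ x = a j ∨ x = b j ∨ ∃ i, f i = x := by
  simp [matchingClique]

lemma mem_transversals_update [Fintype V] [Fintype α] [DecidableEq α] [DecidableEq V]
    {f : {x // x ≠ a₀} → V} (hf : f ∈ transversals c a₀) {w : V} (hw : ∀ i, f i ≠ w) :
    f ∈ transversals (Function.update c w a₀) a₀ := by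
  rw [mem_transversals] at hf ⊢
  intro i
  rw [Function.update_of_ne (hw i), hf]

lemma eq_or_eq_of_mem_matchingClique [Fintype V] [Fintype α] [DecidableEq α] [DecidableEq V]
    {j : ι} {f : {x // x ≠ a₀} → V} (hf : f ∈ transversals c a₀) {x : V}
    (hx : x ∈ matchingClique a b j f) (hcx : c x = a₀) : x = a j ∨ x = b j := by
  rcases mem_matchingClique.1 hx with h | h | ⟨i, rfl⟩
  · exact .inl h
  · exact .inr h
  · exact absurd (mem_transversals.1 hf i ▸ hcx) i.2

namespace IsClassMatching

lemma left_inj (hM : IsClassMatching c a₀ a b) {j j' : ι} : a j = a j' ↔ j = j' :=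
  ⟨fun h => Sum.inl_injective (hM.injective (a₁ := .inl j) (a₂ := .inl j') h), congrArg a⟩

lemma right_inj (hM : IsClassMatching c a₀ a b) {j j' : ι} : b j = b j' ↔ j = j' :=
  ⟨fun h => Sum.inr_injective (hM.injective (a₁ := .inr j) (a₂ := .inr j') h), congrArg b⟩

lemma left_ne_right (hM : IsClassMatching c a₀ a b) (j j' : ι) : a j ≠ b j' :=
  fun h => Sum.inl_ne_inr (hM.injective (a₁ := .inl j) (a₂ := .inr j') h)

lemma color_of_mem (hM : IsClassMatching c a₀ a b) {j : ι} {x : V} (hx : x ∈ s(a j, b j)) :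
    c x = a₀ := by
  rcases Sym2.mem_iff.1 hx with rfl | rfl
  exacts [hM.color_left j, hM.color_right j]

lemma eq_of_mem_of_mem (hM : IsClassMatching c a₀ a b) {j j' : ι} {x : V}
    (hx : x ∈ s(a j, b j)) (hx' : x ∈ s(a j', b j')) : j = j' := by
  rcases Sym2.mem_iff.1 hx with rfl | rfl <;> rcases Sym2.mem_iff.1 hx' with h | h
  · exact hM.left_inj.1 h
  · exact absurd h (hM.left_ne_right j j')
  · exact absurd h.symm (hM.left_ne_right j' j)
  · exact hM.right_inj.1 h

lemma update [DecidableEq V] (hM : IsClassMatching c a₀ a b) (w : V) :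
    IsClassMatching (Function.update c w a₀) a₀ a b := by
  refine ⟨hM.injective, fun j => ?_, fun j => ?_⟩ <;>
    rw [Function.update_apply] <;> split_ifs <;> simp [hM.color_left, hM.color_right]

lemma adj_iff (hM : IsClassMatching c a₀ a b) {x y : V} :
    (multipartiteWithMatching c a b).Adj x y ↔ c x ≠ c y ∨ ∃ j, s(a j, b j) = s(x, y) := by
  simp only [multipartiteWithMatching, sup_adj, comap_adj, top_adj, fromEdgeSet_adj,
    Set.mem_range]
  refine or_congr_right ⟨fun h => h.1, fun ⟨j, hj⟩ => ⟨⟨j, hj⟩, fun hxy => ?_⟩⟩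
  subst hxy
  rcases Sym2.eq_iff.1 hj with ⟨h, h'⟩ | ⟨h, h'⟩ <;>
    exact hM.left_ne_right j j (h.trans h'.symm)

lemma edgeCount_eq [Fintype V] [Fintype ι] (hM : IsClassMatching c a₀ a b) :
    edgeCount (multipartiteWithMatching c a b) =
      edgeCount ((⊤ : SimpleGraph α).comap c) + Fintype.card ι := by
  have hR : (fromEdgeSet (Set.range fun j => s(a j, b j))).edgeSet =
      Set.range fun j => s(a j, b j) := by
    rw [edgeSet_fromEdgeSet, sdiff_eq_left, Set.disjoint_left]
    rintro _ ⟨j, rfl⟩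
    exact Sym2.mk_isDiag_iff.not.2 (hM.left_ne_right j j)
  have hdisj : Disjoint ((⊤ : SimpleGraph α).comap c).edgeSet
      (Set.range fun j => s(a j, b j)) := by
    rw [Set.disjoint_right]
    rintro _ ⟨j, rfl⟩
    simp [hM.color_left, hM.color_right]
  have hinj : Function.Injective fun j => s(a j, b j) :=
    fun j j' (h : s(a j, b j) = s(a j', b j')) =>
      hM.eq_of_mem_of_mem (Sym2.mem_mk_left _ _) (h ▸ Sym2.mem_mk_left _ _)
  rw [edgeCount, edgeCount, multipartiteWithMatching, edgeSet_sup, hR, Nat.card_coe_set_eq,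
    Nat.card_coe_set_eq, Set.ncard_union_eq hdisj, Set.ncard_range_of_injective hinj,
    Nat.card_eq_fintype_card]

lemma exists_eq_of_adj_of_color_eq (hM : IsClassMatching c a₀ a b) {x y : V}
    (hxy : (multipartiteWithMatching c a b).Adj x y) (hc : c x = c y) :
    ∃ j, s(a j, b j) = s(x, y) :=
  (hM.adj_iff.1 hxy).resolve_left (not_not.2 hc)

lemma eq_of_mem_of_color_eq (hM : IsClassMatching c a₀ a b) {T : Finset V}
    (hT : (multipartiteWithMatching c a b).IsClique T) {z z' : V} (hz : z ∈ T) (hz' : z' ∈ T)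
    (hc : c z = c z') (hne : c z ≠ a₀) : z = z' := by
  by_contra h
  obtain ⟨j, hj⟩ := hM.exists_eq_of_adj_of_color_eq (hT hz hz' h) hc
  exact hne (hM.color_of_mem (hj.symm ▸ Sym2.mem_mk_left z z'))

lemma eq_or_eq_of_mem_of_color_eq (hM : IsClassMatching c a₀ a b) {T : Finset V}
    (hT : (multipartiteWithMatching c a b).IsClique T) {j : ι} (haT : a j ∈ T) {z : V}
    (hz : z ∈ T) (hcz : c z = a₀) : z = a j ∨ z = b j := by
  by_contra! h
  obtain ⟨j', hj'⟩ := hM.exists_eq_of_adj_of_color_eq (hT hz haT h.1)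
    (hcz.trans (hM.color_left j).symm)
  obtain rfl : j' = j :=
    hM.eq_of_mem_of_mem (hj' ▸ Sym2.mem_mk_right _ _) (Sym2.mem_mk_left _ _)
  rcases Sym2.eq_iff.1 hj' with ⟨-, h'⟩ | ⟨-, h'⟩
  · exact hM.left_ne_right j' j' h'.symm
  · exact h.2 h'.symm

variable [Fintype V] [Fintype α] [DecidableEq α] [DecidableEq V]

lemma eq_apply_of_mem_matchingClique (hM : IsClassMatching c a₀ a b) {j : ι}
    {f : {x // x ≠ a₀} → V} (hf : f ∈ transversals c a₀) {x : V}
    (hx : x ∈ matchingClique a b j f) (hcx : c x ≠ a₀) : x = f ⟨c x, hcx⟩ := by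
  rcases mem_matchingClique.1 hx with rfl | rfl | ⟨i, rfl⟩
  · exact absurd (hM.color_left j) hcx
  · exact absurd (hM.color_right j) hcx
  · congr
    exact (Subtype.ext (mem_transversals.1 hf i)).symm

lemma isNClique_matchingClique (hM : IsClassMatching c a₀ a b) (j : ι)
    {f : {x // x ≠ a₀} → V} (hf : f ∈ transversals c a₀) :
    (multipartiteWithMatching c a b).IsNClique (Fintype.card α + 1) (matchingClique a b j f) := by
  rw [mem_transversals] at hf
  have hcolor : ∀ i, c (f i) ≠ a₀ := fun i => (hf i).symm ▸ i.2
  have hadj : ∀ {x y}, c x ≠ c y → (multipartiteWithMatching c a b).Adj x y :=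
    fun h => hM.adj_iff.2 (.inl h)
  have hab : (multipartiteWithMatching c a b).Adj (a j) (b j) := hM.adj_iff.2 (.inr ⟨j, rfl⟩)
  have hf_inj : Function.Injective f :=
    fun i i' h => Subtype.ext ((hf i).symm.trans (h ▸ hf i'))
  refine ⟨fun x hx y hy hxy => ?_, ?_⟩
  · simp only [matchingClique, coe_insert, coe_image, coe_univ, Set.image_univ,
      Set.mem_insert_iff, Set.mem_range] at hx hy
    rcases hx with rfl | rfl | ⟨i, rfl⟩ <;> rcases hy with rfl | rfl | ⟨i', rfl⟩
    all_goals first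
      | exact absurd rfl hxy | exact hab | exact hab.symm
      | apply hadj; simp only [hM.color_left, hM.color_right, hf]
        first | exact i.2 | exact i'.2.symm | exact fun h => hxy (congrArg f (Subtype.ext h))
  · have hcard : Fintype.card {x // x ≠ a₀} + 2 = Fintype.card α + 1 := by
      have := Fintype.card_pos_iff.2 ⟨a₀⟩
      simp only [Fintype.card_subtype_compl, Fintype.card_unique]
      omega
    rw [matchingClique, card_insert_of_notMem, card_insert_of_notMem,
      card_image_of_injective _ hf_inj, card_univ, ← hcard]
    · simpa using fun i (h : f i = b j) => hcolor i (h ▸ hM.color_right j)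
    · simpa [hM.left_ne_right] using fun i (h : f i = a j) => hcolor i (h ▸ hM.color_left j)

lemma exists_eq_matchingClique (hM : IsClassMatching c a₀ a b) {T : Finset V}
    (hT : (multipartiteWithMatching c a b).IsNClique (Fintype.card α + 1) T) :
    ∃ j, ∃ f ∈ transversals c a₀, T = matchingClique a b j f := by
  -- `T` has more vertices than there are colours
  obtain ⟨x, hx, y, hy, hxy, hc⟩ := exists_ne_map_eq_of_card_lt_of_maps_to (s := T)
    (t := univ) (by simp [hT.card_eq]) fun x _ => mem_coe.2 (mem_univ (c x))
  obtain ⟨j, hj⟩ := hM.exists_eq_of_adj_of_color_eq (hT.isClique hx hy hxy) hc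
  have hpair : ∀ z ∈ s(a j, b j), z ∈ T := fun z hz => by
    rw [hj, Sym2.mem_iff] at hz
    rcases hz with rfl | rfl <;> assumption
  have haT := hpair _ (Sym2.mem_mk_left _ _)
  have hbT := hpair _ (Sym2.mem_mk_right _ _)
  set T' := (T.erase (a j)).erase (b j)
  have hT' : ∀ z ∈ T', z ∈ T ∧ c z ≠ a₀ := fun z hz => by
    simp only [T', mem_erase] at hz
    exact ⟨hz.2.2, fun hcz =>
      (hM.eq_or_eq_of_mem_of_color_eq hT.isClique haT hz.2.2 hcz).elim hz.2.1 hz.1⟩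
  -- `c` is injective on the remaining `card α - 1` vertices, so it hits every other colour
  have himage : T'.image c = univ.erase a₀ := by
    refine eq_of_subset_of_card_le (fun i hi => ?_) ?_
    · obtain ⟨z, hz, rfl⟩ := mem_image.1 hi
      exact mem_erase.2 ⟨(hT' z hz).2, mem_univ _⟩
    · rw [card_image_of_injOn fun z hz z' hz' h => hM.eq_of_mem_of_color_eq hT.isClique
        (hT' z hz).1 (hT' z' hz').1 h (hT' z hz).2, card_erase_of_mem (mem_univ _), card_univ,
        card_erase_of_mem (mem_erase.2 ⟨(hM.left_ne_right j j).symm, hbT⟩),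
        card_erase_of_mem haT, hT.card_eq]
      simp
  choose f hfT hfc using fun i : {x // x ≠ a₀} =>
    mem_image.1 (himage ▸ mem_erase.2 ⟨i.2, mem_univ _⟩)
  refine ⟨j, f, mem_transversals.2 hfc, ?_⟩
  ext z
  refine ⟨fun hz => ?_, fun hz => ?_⟩
  · by_cases hcz : c z = a₀
    · rcases hM.eq_or_eq_of_mem_of_color_eq hT.isClique haT hz hcz with rfl | rfl <;>
        simp [mem_matchingClique]
    · exact mem_matchingClique.2 (.inr (.inr ⟨⟨c z, hcz⟩,
        hM.eq_of_mem_of_color_eq hT.isClique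
        (hT' _ (hfT _)).1 hz (hfc _) (hfc _ ▸ hcz)⟩))
  · rcases mem_matchingClique.1 hz with rfl | rfl | ⟨i, rfl⟩
    exacts [haT, hbT, (hT' _ (hfT i)).1]

lemma matchingClique_injOn [Fintype ι] (hM : IsClassMatching c a₀ a b) :
    Set.InjOn (fun p : ι × ({x // x ≠ a₀} → V) => matchingClique a b p.1 p.2)
      ↑(univ ×ˢ transversals c a₀ : Finset (ι × ({x // x ≠ a₀} → V))) := by
  rintro ⟨j, f⟩ hf ⟨j', f'⟩ hf' h
  simp only [coe_product, coe_univ, Set.mem_prod, Set.mem_univ, true_and, mem_coe] at hf hf' h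
  obtain rfl : j = j' := by
    rcases eq_or_eq_of_mem_matchingClique hf' (h ▸ mem_matchingClique.2 (.inl rfl))
      (hM.color_left j) with h' | h'
    exacts [hM.left_inj.1 h', absurd h' (hM.left_ne_right j j')]
  refine Prod.ext rfl (funext fun i => ?_)
  have hfi : c (f i) = i := mem_transversals.1 hf i
  have hi : c (f i) ≠ a₀ := hfi ▸ i.2
  simpa [hfi] using hM.eq_apply_of_mem_matchingClique hf'
    (h ▸ mem_matchingClique.2 (.inr (.inr ⟨i, rfl⟩))) hi

lemma cliqueFinset_eq_image [Fintype ι] [DecidableRel (multipartiteWithMatching c a b).Adj]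
    (hM : IsClassMatching c a₀ a b) :
    (multipartiteWithMatching c a b).cliqueFinset (Fintype.card α + 1) =
      (univ ×ˢ transversals c a₀).image fun p => matchingClique a b p.1 p.2 := by
  ext T
  simp only [mem_cliqueFinset_iff, mem_image, mem_product, mem_univ, true_and, Prod.exists]
  refine ⟨fun hT => ?_, ?_⟩
  · obtain ⟨j, f, hf, rfl⟩ := hM.exists_eq_matchingClique hT
    exact ⟨j, f, hf, rfl⟩
  · rintro ⟨j, f, hf, rfl⟩
    exact hM.isNClique_matchingClique j hf

lemma cliqueCount_eq [Fintype ι] (hM : IsClassMatching c a₀ a b) :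
    cliqueCount (multipartiteWithMatching c a b) (Fintype.card α + 1) =
      Fintype.card ι * ∏ i : {x // x ≠ a₀}, #{v | c v = i} := by
  classical
  rw [cliqueCount_eq_card_cliqueFinset, hM.cliqueFinset_eq_image,
    card_image_of_injOn hM.matchingClique_injOn, card_product, card_univ, transversals,
    Fintype.card_piFinset]

lemma card_filter_mem_mem_cliqueFinset [Fintype ι]
    [DecidableRel (multipartiteWithMatching c a b).Adj] (hM : IsClassMatching c a₀ a b)
    (j₀ : ι) {v : V} (hv : c v ≠ a₀) :
    #{T ∈ (multipartiteWithMatching c a b).cliqueFinset (Fintype.card α + 1) |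
        a j₀ ∈ T ∧ v ∈ T} =
      ∏ i ∈ univ.erase (⟨c v, hv⟩ : {x // x ≠ a₀}), #{w | c w = i} := by
  rw [hM.cliqueFinset_eq_image, filter_image, card_image_of_injOn
    (hM.matchingClique_injOn.mono (coe_subset.2 (filter_subset _ _)))]
  have : ({p ∈ univ ×ˢ transversals c a₀ | a j₀ ∈ matchingClique a b p.1 p.2 ∧
      v ∈ matchingClique a b p.1 p.2} : Finset _) =
      {j₀} ×ˢ {f ∈ transversals c a₀ | f ⟨c v, hv⟩ = v} := by
    ext ⟨j, f⟩
    simp only [mem_filter, mem_product, mem_univ, true_and, mem_singleton]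
    refine ⟨fun ⟨hf, ha, hvT⟩ =>
      ⟨?_, hf, (hM.eq_apply_of_mem_matchingClique hf hvT hv).symm⟩,
      fun ⟨hj, hf, hfv⟩ => ⟨hf, hj ▸ mem_matchingClique.2 (.inl rfl),
        hfv ▸ mem_matchingClique.2 (.inr (.inr ⟨_, rfl⟩))⟩⟩
    rcases eq_or_eq_of_mem_matchingClique hf ha (hM.color_left j₀) with h | h
    exacts [(hM.left_inj.1 h).symm, absurd h (hM.left_ne_right j₀ j)]
  rw [this, card_product, card_singleton, one_mul, transversals]
  exact Fintype.card_filter_piFinset_eq_of_mem _ _ (by simp)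

lemma cliqueCover_eq [Fintype ι] (hM : IsClassMatching c a₀ a b) {H : SimpleGraph V}
    (hH : H ≤ multipartiteWithMatching c a b) (g : {x // x ≠ a₀} → ι → V)
    (hg : ∀ j, (fun i => g i j) ∈ transversals c a₀)
    (hg_inj : ∀ i, Function.Injective (g i))
    (hclique : ∀ j, H.IsNClique (Fintype.card α + 1) (matchingClique a b j fun i => g i j)) :
    cliqueCover H (Fintype.card α + 1) = Fintype.card ι := by
  refine cliqueCover_eq_of_cover_of_packing (univ.image a) (fun T hT => ?_) _ hclique
    (fun j j' hne => disjoint_left.2 fun x hx hx' => hne ?_)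
    (card_image_of_injective _ fun j j' h => hM.left_inj.1 h)
  · obtain ⟨j, f, -, rfl⟩ := hM.exists_eq_matchingClique (hT.mono hH)
    exact ⟨a j, mem_matchingClique.2 (.inl rfl), mem_image_of_mem _ (mem_univ _)⟩
  · by_cases hcx : c x = a₀
    · exact hM.eq_of_mem_of_mem (Sym2.mem_iff.2 (eq_or_eq_of_mem_matchingClique (hg j) hx hcx))
        (Sym2.mem_iff.2 (eq_or_eq_of_mem_matchingClique (hg j') hx' hcx))
    · exact hg_inj _ ((hM.eq_apply_of_mem_matchingClique (hg j) hx hcx).symm.trans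
        (hM.eq_apply_of_mem_matchingClique (hg j') hx' hcx))

end IsClassMatching

end MatchingGraph

section Construction

variable {m s n : ℕ}

def residue (m : ℕ) {n : ℕ} (v : Fin n) : Fin (m + 2) :=
  ⟨v % (m + 2), Nat.mod_lt _ (by omega)⟩

lemma turanGraph_eq_comap_residue :
    turanGraph n (m + 2) = (⊤ : SimpleGraph (Fin (m + 2))).comap (residue m) := by
  ext v w
  simp [turanGraph_adj, residue, Fin.ext_iff]

lemma card_residue_eq (i : Fin (m + 2)) :
    #{v : Fin n | residue m v = i} = n / (m + 2) + if (i : ℕ) < n % (m + 2) then 1 else 0 := by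
  have := Nat.count_modEq_card n (Nat.succ_pos (m + 1)) i
  rw [Nat.mod_eq_of_lt i.2, Nat.count_eq_card_filter_range, ← Nat.Iio_eq_range,
    ← Fin.map_valEmbedding_univ, filter_map, card_map] at this
  rw [← this]
  congr 1
  ext v
  simp [residue, Fin.ext_iff, Nat.ModEq, Nat.mod_eq_of_lt i.2]

def leftVertex (hn : 2 * s * (m + 2) ≤ n) (j : Fin s) : Fin n :=
  ⟨j * (m + 2), by nlinarith [j.2]⟩

def rightVertex (hn : 2 * s * (m + 2) ≤ n) (j : Fin s) : Fin n :=
  ⟨(s + j) * (m + 2), by nlinarith [j.2]⟩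

-- The vertex of class `i` in the `j`-th of `s` disjoint cliques. All these vertices are at least
-- `m + 2`, so they avoid the recoloured vertex and the endpoint `1` of the deleted edge.
def packingVertex (hn : 2 * s * (m + 2) ≤ n) (i : {x : Fin (m + 2) // x ≠ 0}) (j : Fin s) :
    Fin n :=
  ⟨i.1 + (j + 1) * (m + 2), by nlinarith [i.1.2, j.2]⟩

lemma isClassMatching_residue (hn : 2 * s * (m + 2) ≤ n) :
    IsClassMatching (residue m) 0 (leftVertex hn) (rightVertex hn) := by
  refine ⟨Function.Injective.sumElim (fun j j' h => ?_) (fun j j' h => ?_) fun j j' h => ?_,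
    fun j => ?_, fun j => ?_⟩
  · simpa [leftVertex, Fin.ext_iff] using h
  · simpa [rightVertex, Fin.ext_iff] using h
  · have := Nat.eq_of_mul_eq_mul_right (by omega) (Fin.ext_iff.1 h)
    omega
  · simp [residue, leftVertex]
  · simp [residue, rightVertex]

lemma packingVertex_mem_transversals (hn : 2 * s * (m + 2) ≤ n) (j : Fin s) :
    (fun i => packingVertex hn i j) ∈ transversals (residue m) 0 :=
  mem_transversals.2 fun i => Fin.ext (by simp [residue, packingVertex, Nat.mod_eq_of_lt i.1.2])

lemma packingVertex_injective (hn : 2 * s * (m + 2) ≤ n) (i : {x : Fin (m + 2) // x ≠ 0}) :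
    Function.Injective (packingVertex hn i) := fun j j' h => by
  simpa [packingVertex, Fin.ext_iff] using h

lemma le_packingVertex (hn : 2 * s * (m + 2) ≤ n) (i : {x : Fin (m + 2) // x ≠ 0}) (j : Fin s) :
    m + 2 ≤ packingVertex hn i j := by
  simp only [packingVertex]
  nlinarith

lemma exists_graph_recolor (hs : 0 < s) (hn : 2 * s * (m + 2) ≤ n) (d : Fin (m + 2))
    (hd : d ≠ 0) (hcard : #{v : Fin n | residue m v = 0} = #{v : Fin n | residue m v = d}) :
    ∃ G : SimpleGraph (Fin n), edgeCount G = turanEdges (m + 2) n + (s - 1) ∧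
      cliqueCover G (m + 3) = s ∧
      cliqueCount G (m + 3) = s * ∏ i : {x : Fin (m + 2) // x ≠ 0},
        (#{v : Fin n | residue m v = i} - if d = i then 1 else 0) := by
  let w : Fin n := ⟨d, by nlinarith [d.2]⟩
  have hw : residue m w = d := Fin.ext (Nat.mod_eq_of_lt d.2)
  have hM := (isClassMatching_residue hn).update w
  refine ⟨multipartiteWithMatching (Function.update (residue m) w 0) (leftVertex hn)
    (rightVertex hn), ?_, ?_, ?_⟩
  · have := edgeCount_comap_update_add_one (residue m) w (hw ▸ hd.symm) (hw ▸ hcard)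
    rw [hM.edgeCount_eq, turanEdges, turanGraph_eq_comap_residue, Fintype.card_fin]
    omega
  · have hpack (j : Fin s) : (fun i => packingVertex hn i j) ∈
        transversals (Function.update (residue m) w 0) 0 :=
      mem_transversals_update (packingVertex_mem_transversals hn j) fun i h =>
        (le_packingVertex hn i j).not_gt (by rw [h]; exact d.2)
    simpa using hM.cliqueCover_eq le_rfl _ hpack (packingVertex_injective hn)
      fun j => hM.isNClique_matchingClique j (hpack j)
  · rw [show m + 3 = Fintype.card (Fin (m + 2)) + 1 by simp, hM.cliqueCount_eq, Fintype.card_fin]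
    congr 1
    refine Fintype.prod_congr _ _ fun i => ?_
    rw [card_filter_update_eq _ _ i.2, hw]

lemma exists_graph_deleteEdge (hs : 0 < s) (hn : 2 * s * (m + 2) ≤ n) :
    ∃ G : SimpleGraph (Fin n), edgeCount G = turanEdges (m + 2) n + (s - 1) ∧
      cliqueCover G (m + 3) = s ∧
      cliqueCount G (m + 3) =
        s * ∏ i : {x : Fin (m + 2) // x ≠ 0}, #{v : Fin n | residue m v = i}
        - ∏ i ∈ univ.erase (⟨1, Fin.zero_lt_one.ne'⟩ : {x : Fin (m + 2) // x ≠ 0}),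
          #{v : Fin n | residue m v = i} := by
  classical
  have hM := isClassMatching_residue hn
  let u := leftVertex hn ⟨0, hs⟩
  let v : Fin n := ⟨1, by nlinarith⟩
  have huv : u ≠ v := by simp [u, v, leftVertex, Fin.ext_iff]
  have hv : residue m v = 1 := Fin.ext (by simp [residue, v])
  have hv0 : residue m v ≠ 0 := hv ▸ Fin.zero_lt_one.ne'
  have hadj : (multipartiteWithMatching (residue m) (leftVertex hn) (rightVertex hn)).Adj u v :=
    hM.adj_iff.2 (.inl (by rw [hM.color_left]; exact hv0.symm))
  refine ⟨(multipartiteWithMatching (residue m) (leftVertex hn) (rightVertex hn)).deleteEdges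
    {s(u, v)}, ?_, ?_, ?_⟩
  · have := edgeCount_deleteEdges_add_one _ (mem_edgeSet _ |>.2 hadj)
    rw [hM.edgeCount_eq, turanEdges, turanGraph_eq_comap_residue, Fintype.card_fin] at *
    omega
  · have hvT (j : Fin s) :
        v ∉ matchingClique (leftVertex hn) (rightVertex hn) j fun i => packingVertex hn i j :=
      fun h => (le_packingVertex hn _ j).not_gt (by
        rw [← hM.eq_apply_of_mem_matchingClique (packingVertex_mem_transversals hn j) h hv0]
        simp [v])
    simpa using hM.cliqueCover_eq (deleteEdges_le _) _ (packingVertex_mem_transversals hn)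
      (packingVertex_injective hn) fun j => (isNClique_deleteEdges_iff huv).2
        ⟨hM.isNClique_matchingClique j (packingVertex_mem_transversals hn j),
          fun h => hvT j h.2⟩
  · have := cliqueCount_deleteEdges_add
      (multipartiteWithMatching (residue m) (leftVertex hn) (rightVertex hn)) huv
      (Fintype.card (Fin (m + 2)) + 1)
    rw [hM.cliqueCount_eq, hM.card_filter_mem_mem_cliqueFinset _ hv0,
      show (⟨residue m v, hv0⟩ : {x : Fin (m + 2) // x ≠ 0}) =
        ⟨1, Fin.zero_lt_one.ne'⟩ from Subtype.ext hv,
      show Fintype.card (Fin (m + 2)) + 1 = m + 3 by simp, Fintype.card_fin] at this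
    omega

lemma prod_subtype_ne_zero_eq_prod_range (h : ℕ → ℕ) :
    ∏ i : {x : Fin (m + 2) // x ≠ 0}, h i = ∏ j ∈ range (m + 1), h (j + 1) := by
  rw [← Fin.prod_univ_eq_prod_range (fun j => h (j + 1)),
    ← Fintype.prod_equiv (finSuccAboveEquiv 0) (fun i => h (i + 1)) _ fun i => by
      simp [finSuccAboveEquiv_apply]]

lemma exists_graph_of_mod_eq_zero (hs : 0 < s) (hn : 2 * s * (m + 2) ≤ n)
    (hr : n % (m + 2) = 0) :
    ∃ G : SimpleGraph (Fin n), edgeCount G = turanEdges (m + 2) n + (s - 1) ∧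
      cliqueCover G (m + 3) = s ∧
      cliqueCount G (m + 3) = s * (n / (m + 2)) ^ m * (n / (m + 2) - 1) := by
  obtain ⟨G, he, hc, hN⟩ := exists_graph_recolor hs hn (Fin.last (m + 1)) Fin.last_pos.ne'
    (by simp [card_residue_eq, hr])
  refine ⟨G, he, hc, hN.trans ?_⟩
  have hfactor (i : {x : Fin (m + 2) // x ≠ 0}) :
      (#{v : Fin n | residue m v = i} - if Fin.last (m + 1) = i then 1 else 0) =
        if m + 1 = ((i : Fin (m + 2)) : ℕ) then n / (m + 2) - 1 else n / (m + 2) := by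
    rw [card_residue_eq, hr, if_neg (Nat.not_lt_zero _), add_zero]
    simp only [Fin.ext_iff, Fin.val_last]
    split_ifs <;> rfl
  rw [Fintype.prod_congr _ _ hfactor, prod_subtype_ne_zero_eq_prod_range
    (fun j => if m + 1 = j then n / (m + 2) - 1 else n / (m + 2)), prod_range_succ,
    prod_congr rfl fun j hj => if_neg (by simp at hj; omega), prod_const, card_range, if_pos rfl,
    mul_assoc]

lemma exists_graph_of_mod_eq_one (hs : 0 < s) (hn : 2 * s * (m + 2) ≤ n)
    (hr : n % (m + 2) = 1) :
    ∃ G : SimpleGraph (Fin n), edgeCount G = turanEdges (m + 2) n + (s - 1) ∧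
      cliqueCover G (m + 3) = s ∧
      cliqueCount G (m + 3) = s * (n / (m + 2)) ^ (m + 1) - (n / (m + 2)) ^ m := by
  obtain ⟨G, he, hc, hN⟩ := exists_graph_deleteEdge hs hn
  refine ⟨G, he, hc, hN.trans ?_⟩
  have hq (i : {x : Fin (m + 2) // x ≠ 0}) : #{v : Fin n | residue m v = i} = n / (m + 2) := by
    simp [card_residue_eq, hr, i.2]
  simp [hq, prod_const, card_erase_of_mem]

lemma exists_graph_of_two_le_mod (hs : 0 < s) (hn : 2 * s * (m + 2) ≤ n)
    (hr : 2 ≤ n % (m + 2)) :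
    ∃ G : SimpleGraph (Fin n), edgeCount G = turanEdges (m + 2) n + (s - 1) ∧
      cliqueCover G (m + 3) = s ∧
      cliqueCount G (m + 3) = s * (n / (m + 2) + 1) ^ (n % (m + 2) - 2) *
        (n / (m + 2)) ^ (m + 3 - n % (m + 2)) := by
  obtain ⟨r, hr_eq⟩ : ∃ r, n % (m + 2) = r := ⟨_, rfl⟩
  have hr' : r < m + 2 := hr_eq ▸ Nat.mod_lt n (by omega)
  rw [hr_eq] at hr ⊢
  let d : Fin (m + 2) := ⟨r - 1, by omega⟩
  obtain ⟨G, he, hc, hN⟩ := exists_graph_recolor hs hn d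
    (fun h => by have := congrArg Fin.val h; simp only [d, Fin.val_zero] at this; omega)
    (by rw [card_residue_eq, card_residue_eq, hr_eq, if_pos (by simp only [Fin.val_zero]; omega),
      if_pos (by simp only [d]; omega)])
  refine ⟨G, he, hc, hN.trans ?_⟩
  have hfactor (i : {x : Fin (m + 2) // x ≠ 0}) :
      (#{v : Fin n | residue m v = i} - if d = i then 1 else 0) =
        if ((i : Fin (m + 2)) : ℕ) < r - 1 then n / (m + 2) + 1 else n / (m + 2) := by
    rw [card_residue_eq, hr_eq]
    simp only [Fin.ext_iff, d]
    generalize ((i : Fin (m + 2)) : ℕ) = x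
    generalize n / (m + 2) = q
    split_ifs <;> omega
  rw [Fintype.prod_congr _ _ hfactor, prod_subtype_ne_zero_eq_prod_range
    (fun j => if j < r - 1 then n / (m + 2) + 1 else n / (m + 2)),
    ← prod_range_mul_prod_Ico _ (show r - 2 ≤ m + 1 by omega),
    prod_congr rfl fun j hj => if_pos (by simp at hj; omega),
    prod_congr rfl fun j hj => if_neg (by simp at hj; omega), prod_const, prod_const, card_range,
    Nat.card_Ico, mul_assoc, show m + 1 - (r - 2) = m + 3 - r by omega]

end Construction

/-- existence of an extremal graph with `t_{k-1}(n) + s - 1` edges,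
`K_k`-covering number `s`, and exactly `N_k(n,s)` copies of `K_k`. -/
theorem stmt_5 (k s : ℕ) (hk : 4 ≤ k) (hs : 2 ≤ s) :
    ∃ n₀ : ℕ, ∀ n ≥ n₀, ∃ G : SimpleGraph (Fin n),
      edgeCount G = turanEdges (k - 1) n + (s - 1) ∧ cliqueCover G k = s ∧
      cliqueCount G k = NkBound k s n := by
  obtain ⟨m, rfl⟩ : ∃ m, k = m + 3 := ⟨k - 3, by omega⟩
  refine ⟨2 * s * (m + 2), fun n hn => ?_⟩
  simp only [NkBound, show m + 3 - 1 = m + 2 by omega, show m + 3 - 2 = m + 1 by omega,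
    show m + 3 - 3 = m by omega]
  split_ifs with h0 h1
  · exact exists_graph_of_mod_eq_zero (by omega) hn h0
  · exact exists_graph_of_mod_eq_one (by omega) hn h1
  · exact exists_graph_of_two_le_mod (by omega) hn (by omega)
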